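/- arXiv:1501.03275 — 2 statements merged into one kernel-verified Lean document; each statement's English description precedes it below -/
import Mathlib

section
/- Let m be an even positive integer. Then there exists (g_0, g_1, ..., g_{m−1}, h) ∈ L_m with g_0 = m/2 − 1; moreover, if m + 1 is a prime power, then there exists (g_0, g_1, ..., g_{m−1}, h) ∈ L_m with g_0² = 1/(m + 1). In particular, L_m is nonempty. -/
/-!
First solution: `g₀ = m/2 - 1`, `g_t = -i^{t²}` for `t ≠ 0`, and `h = (-1)^{m/2+1}`. Since `m` is
even, `i^{t²}` only depends on `t mod m`, and every equation becomes a congruence modulo 4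
between exponents of `i`; in the alternating sum all terms equal `1` except the two that
contain `g₀`, which equal `1 - m/2`.

Second solution: let `F` be the field with `q = m + 1` elements, `χ` a generator of its group of
complex multiplicative characters (so `χ(-1) = -1` and `χ^{m/2} = η` is the quadratic
character), `ψ` a primitive additive character, and put `g_a = G(χ^a)/√q`, `h = χ(4)`, with `G`
the Gauss sum. Then `g₀ = G(1)/√q = -1/√q`; (ii) is `G(φ) G(φ⁻¹) = φ(-1) q`; (iii) is the
duplication formula `φ(4) G(φ) G(ηφ) = G(φ²) G(η)`, which comes from the Jacobi sum identity
`φ(4) J(φ, φ) = J(η, φ)` (substitute `x = (1 - u)/2` and count square roots); (i) follows from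
`φ(-1) φ(x) φ⁻¹(y) = φ(-x/y)` and orthogonality of the powers of `χ`; (iv) is `η(4) = 1`.
-/

/-- The system of order `m` on `g`-level, in unknowns `(g_0, …, g_{m-1}, h)`,
with subscripts of `g` read modulo `m`. -/
def GLevel (m : ℕ) (g : ZMod m → ℂ) (h : ℂ) : Prop :=
  (∀ s : ℕ, 1 ≤ s → s ≤ m / 2 - 1 →
    ∑ t ∈ Finset.range m,
      (-1 : ℂ) ^ t * g (t : ZMod m) * g ((2 * (s : ℤ) - (t : ℤ) : ℤ) : ZMod m) = 0) ∧
  (∀ s : ℕ, 1 ≤ s → s ≤ m / 2 →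
    g (s : ZMod m) * g ((m - s : ℕ) : ZMod m) = (-1 : ℂ) ^ s) ∧
  (∀ s : ℕ, 1 ≤ s → s ≤ m / 2 - 1 →
    h ^ s * g (s : ZMod m) * g ((m / 2 + s : ℕ) : ZMod m)
      = g ((2 * s : ℕ) : ZMod m) * g ((m / 2 : ℕ) : ZMod m)) ∧
  h ^ (m / 2) = 1

open Finset Complex

lemma Complex.I_zpow_eq_of_intCast_eq {a b : ℤ} (h : (a : ZMod 4) = b) : I ^ a = I ^ b := by
  obtain ⟨k, hk⟩ := (ZMod.intCast_eq_intCast_iff_dvd_sub a b 4).mp h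
  rw [show b = a + 4 * k by omega, zpow_add₀ I_ne_zero, zpow_mul, zpow_ofNat, I_pow_four,
    one_zpow, mul_one]

lemma Complex.I_zpow_sq_eq_of_intCast_eq {m : ℕ} (hm : Even m) {a b : ℤ}
    (h : (a : ZMod m) = b) : I ^ (a ^ 2) = I ^ (b ^ 2) := by
  obtain ⟨K, rfl⟩ := hm
  obtain ⟨k, hk⟩ := (ZMod.intCast_eq_intCast_iff_dvd_sub a b _).mp h
  refine I_zpow_eq_of_intCast_eq ((ZMod.intCast_eq_intCast_iff_dvd_sub _ _ 4).mpr
    ⟨a * K * k + K ^ 2 * k ^ 2, ?_⟩)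
  rw [show b = a + (K + K) * k by push_cast at hk; linarith]
  ring

lemma Complex.neg_one_pow_eq_I_zpow (n : ℕ) : (-1 : ℂ) ^ n = I ^ (2 * n : ℤ) := by
  rw [zpow_mul, zpow_ofNat, I_sq, zpow_natCast]

lemma ZMod.intCast_ne_zero_of_abs_lt {m : ℕ} {n : ℤ} (h0 : n ≠ 0) (h : |n| < m) :
    (n : ZMod m) ≠ 0 :=
  fun hn ↦ h0 (Int.eq_zero_of_abs_lt_dvd ((ZMod.intCast_zmod_eq_zero_iff_dvd n m).mp hn) h)

noncomputable def quadraticPhase (m : ℕ) (t : ZMod m) : ℂ :=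
  if t = 0 then (m : ℂ) / 2 - 1 else -I ^ ((t.val : ℤ) ^ 2)

section quadraticPhase

variable {m : ℕ}

lemma quadraticPhase_zero : quadraticPhase m 0 = (m : ℂ) / 2 - 1 := if_pos rfl

variable [NeZero m]

lemma quadraticPhase_intCast (hm : Even m) {n : ℤ} (hn : (n : ZMod m) ≠ 0) :
    quadraticPhase m n = -I ^ (n ^ 2) := by
  rw [quadraticPhase, if_neg hn, I_zpow_sq_eq_of_intCast_eq hm (b := n) (by simp)]

lemma quadraticPhase_natCast (hm : Even m) {n : ℕ} (h0 : 0 < n) (h : n < m) :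
    quadraticPhase m n = -I ^ ((n : ℤ) ^ 2) := by
  have hn : ((n : ℤ) : ZMod m) ≠ 0 :=
    ZMod.intCast_ne_zero_of_abs_lt (by omega) (abs_lt.mpr ⟨by omega, by omega⟩)
  simpa using quadraticPhase_intCast hm hn

lemma quadraticPhase_mul_quadraticPhase_sub (hm : Even m) {s : ℕ} (h0 : 0 < s) (h : s < m) :
    quadraticPhase m s * quadraticPhase m ((m - s : ℕ) : ZMod m) = (-1) ^ s := by
  have hs : ((m - s : ℕ) : ZMod m) = ((-s : ℤ) : ZMod m) := by simp [Nat.cast_sub h.le]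
  have hs0 : ((-s : ℤ) : ZMod m) ≠ 0 :=
    ZMod.intCast_ne_zero_of_abs_lt (by omega) (abs_lt.mpr ⟨by omega, by omega⟩)
  rw [hs, quadraticPhase_natCast hm h0 h, quadraticPhase_intCast hm hs0, neg_mul_neg,
    ← zpow_add₀ I_ne_zero, neg_one_pow_eq_I_zpow]
  apply I_zpow_eq_of_intCast_eq
  push_cast
  generalize (s : ZMod 4) = x
  revert x
  decide

lemma quadraticPhase_shift_half (hm : Even m) {s : ℕ} (h0 : 0 < s) (h : s < m / 2) :
    ((-1) ^ (m / 2 + 1)) ^ s * quadraticPhase m s * quadraticPhase m ((m / 2 + s : ℕ) : ZMod m)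
      = quadraticPhase m ((2 * s : ℕ) : ZMod m) * quadraticPhase m ((m / 2 : ℕ) : ZMod m) := by
  obtain ⟨K, rfl⟩ := hm
  have hK : (K + K) / 2 = K := by omega
  rw [hK] at h ⊢
  rw [quadraticPhase_natCast ⟨K, rfl⟩ h0 (by omega),
    quadraticPhase_natCast ⟨K, rfl⟩ (by omega) (by omega : K + s < K + K),
    quadraticPhase_natCast ⟨K, rfl⟩ (by omega) (by omega : 2 * s < K + K),
    quadraticPhase_natCast ⟨K, rfl⟩ (by omega) (by omega : K < K + K),
    ← pow_mul, neg_one_pow_eq_I_zpow]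
  simp only [mul_neg, neg_mul, neg_neg, ← zpow_add₀ I_ne_zero]
  apply I_zpow_eq_of_intCast_eq
  push_cast
  generalize (s : ZMod 4) = x
  generalize (K : ZMod 4) = y
  revert x y
  decide

lemma quadraticPhase_two_mul (hm : Even m) {s : ℕ} (h0 : 0 < s) (h : 2 * s < m) :
    quadraticPhase m (2 * s) = -1 := by
  have hne : ((2 * s : ℤ) : ZMod m) ≠ 0 :=
    ZMod.intCast_ne_zero_of_abs_lt (by omega) (abs_lt.mpr ⟨by omega, by omega⟩)
  have h4 : ((((2 * s) ^ 2 : ℤ)) : ZMod 4) = ((0 : ℤ) : ZMod 4) := by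
    push_cast
    generalize (s : ZMod 4) = x
    revert x
    decide
  simpa [I_zpow_eq_of_intCast_eq h4] using quadraticPhase_intCast hm hne

lemma quadraticPhase_alternating_sum (hm : Even m) {s : ℕ} (h0 : 0 < s) (h : 2 * s < m) :
    ∑ t ∈ range m, (-1 : ℂ) ^ t * quadraticPhase m t
      * quadraticPhase m ((2 * (s : ℤ) - (t : ℤ) : ℤ) : ZMod m) = 0 := by
  have h2s := quadraticPhase_two_mul hm h0 h
  have hterm : ∀ t ∈ range m, (-1 : ℂ) ^ t * quadraticPhase m t
      * quadraticPhase m ((2 * (s : ℤ) - (t : ℤ) : ℤ) : ZMod m)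
      = 1 - (m / 2 : ℂ) * (if t = 0 then 1 else 0)
        - (m / 2 : ℂ) * (if t = 2 * s then 1 else 0) := by
    intro t ht
    rw [mem_range] at ht
    by_cases ht0 : t = 0
    · subst ht0
      rw [if_pos rfl, if_neg (by omega)]
      push_cast
      rw [sub_zero, h2s, quadraticPhase_zero]
      ring
    by_cases ht2 : t = 2 * s
    · subst ht2
      rw [if_neg ht0, if_pos rfl, pow_mul]
      push_cast
      rw [sub_self, h2s, quadraticPhase_zero]
      ring
    have hne : ((2 * (s : ℤ) - (t : ℤ) : ℤ) : ZMod m) ≠ 0 :=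
      ZMod.intCast_ne_zero_of_abs_lt (by omega) (abs_lt.mpr ⟨by omega, by omega⟩)
    have h4 : (((2 * t + t ^ 2 + (2 * s - t) ^ 2 : ℤ)) : ZMod 4) = ((0 : ℤ) : ZMod 4) := by
      push_cast
      generalize (s : ZMod 4) = x
      generalize (t : ZMod 4) = y
      revert x y
      decide
    rw [quadraticPhase_natCast hm (by omega) ht, quadraticPhase_intCast hm hne,
      neg_one_pow_eq_I_zpow, if_neg ht0, if_neg ht2]
    simp only [mul_neg, neg_mul, neg_neg, ← zpow_add₀ I_ne_zero, I_zpow_eq_of_intCast_eq h4]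
    simp
  rw [sum_congr rfl hterm, sum_sub_distrib, sum_sub_distrib, ← mul_sum, ← mul_sum,
    sum_ite_eq', sum_ite_eq', if_pos (mem_range.mpr (NeZero.pos m)), if_pos (mem_range.mpr h)]
  simp
  ring

end quadraticPhase

theorem gLevel_quadraticPhase {m : ℕ} [NeZero m] (hm : Even m) :
    GLevel m (quadraticPhase m) ((-1) ^ (m / 2 + 1)) := by
  refine ⟨fun s h1 h2 ↦ quadraticPhase_alternating_sum hm h1 (by omega),
    fun s h1 h2 ↦ quadraticPhase_mul_quadraticPhase_sub hm h1 (by omega),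
    fun s h1 h2 ↦ quadraticPhase_shift_half hm h1 (by omega), ?_⟩
  rw [← pow_mul, mul_comm]
  exact (Nat.even_mul_succ_self _).neg_one_pow

lemma pow_val_natCast_orderOf {G : Type*} [Monoid G] (x : G) (n : ℕ) :
    x ^ (n : ZMod (orderOf x)).val = x ^ n := by
  rw [ZMod.val_natCast, pow_mod_orderOf]

lemma pow_val_intCast_orderOf {G : Type*} [Group G] {x : G} (hx : 0 < orderOf x) (n : ℤ) :
    x ^ (n : ZMod (orderOf x)).val = x ^ n := by
  have : NeZero (orderOf x) := ⟨hx.ne'⟩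
  rw [← zpow_natCast, ZMod.val_intCast, zpow_mod_orderOf]

lemma gaussSum_mul_gaussSum_inv {F R : Type*} [Field F] [Fintype F] [CommRing R] [IsDomain R]
    {φ : MulChar F R} (hφ : φ ≠ 1) {ψ : AddChar F R} (hψ : ψ.IsPrimitive) :
    gaussSum φ ψ * gaussSum φ⁻¹ ψ = φ (-1) * Fintype.card F := by
  rw [← mul_gaussSum_inv_eq_gaussSum φ⁻¹, mul_left_comm,
    gaussSum_mul_gaussSum_eq_card hφ hψ, MulChar.inv_apply', inv_neg_one]

section FiniteField

variable {F : Type*} [Field F] [Fintype F]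

lemma MulChar.apply_four_mul_jacobiSum_self (hF : ringChar F ≠ 2) (φ : MulChar F ℂ) :
    φ 4 * jacobiSum φ φ = ∑ u : F, φ (1 - u ^ 2) := by
  have h2 : (2 : F) ≠ 0 := Ring.two_ne_zero hF
  have hbij : Function.Bijective fun u : F ↦ (1 - u) / 2 :=
    Function.bijective_iff_has_inverse.mpr
      ⟨fun x ↦ 1 - 2 * x, fun u ↦ by field_simp; ring, fun x ↦ by field_simp; ring⟩
  calc φ 4 * jacobiSum φ φ = ∑ x : F, φ (4 * (x * (1 - x))) := by
        simp only [jacobiSum, Finset.mul_sum, map_mul]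
    _ = ∑ u : F, φ (4 * ((1 - u) / 2 * (1 - (1 - u) / 2))) :=
        (Fintype.sum_bijective _ hbij _ _ fun u ↦ rfl).symm
    _ = ∑ u : F, φ (1 - u ^ 2) := by
        congr! 2 with u
        field_simp
        ring

variable [DecidableEq F]

namespace MulChar

variable {χ : MulChar F ℂ}

lemma exists_pow_eq_of_orderOf_eq (hχ : orderOf χ = Fintype.card Fˣ) (ω : MulChar F ℂ) :
    ∃ k < Fintype.card Fˣ, χ ^ k = ω := by
  have htop : Subgroup.zpowers χ = ⊤ := Subgroup.eq_top_of_card_eq _ <| by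
    rw [Nat.card_zpowers, hχ, card_eq_card_units_of_hasEnoughRootsOfUnity,
      Nat.card_eq_fintype_card]
  obtain ⟨k, rfl⟩ : ω ∈ Submonoid.powers χ :=
    (isOfFinOrder_of_finite χ).mem_powers_iff_mem_zpowers.mpr (htop ▸ Subgroup.mem_top ω)
  exact ⟨k % orderOf χ, hχ ▸ Nat.mod_lt _ χ.orderOf_pos, pow_mod_orderOf χ k⟩

lemma eq_one_of_apply_eq_one (hχ : orderOf χ = Fintype.card Fˣ) {x : F} (hx : χ x = 1) :
    x = 1 := by
  by_contra hx1
  obtain ⟨ω, hω⟩ := exists_apply_ne_one_of_hasEnoughRootsOfUnity F ℂ hx1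
  obtain ⟨k, -, rfl⟩ := exists_pow_eq_of_orderOf_eq hχ ω
  have hu : IsUnit x := by
    by_contra h
    rw [map_nonunit χ h] at hx
    exact zero_ne_one hx
  exact hω (by rw [← hu.unit_spec, pow_apply_coe, hu.unit_spec, hx, one_pow])

lemma apply_neg_one_of_orderOf_eq (hF : ringChar F ≠ 2) (hχ : orderOf χ = Fintype.card Fˣ) :
    χ (-1) = -1 := by
  have hsq : χ (-1) * χ (-1) = 1 := by rw [← map_mul, neg_one_mul, neg_neg, map_one]
  exact (mul_self_eq_one_iff.mp hsq).resolve_left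
    fun h ↦ Ring.neg_one_ne_one_of_char_ne_two hF (eq_one_of_apply_eq_one hχ h)

lemma sum_range_orderOf_pow_apply (hχ : orderOf χ = Fintype.card Fˣ) (a : F) :
    ∑ t ∈ range (orderOf χ), (χ ^ t) a = if a = 1 then (orderOf χ : ℂ) else 0 := by
  rcases eq_or_ne a 1 with rfl | ha1
  · simp
  rw [if_neg ha1]
  by_cases ha : IsUnit a
  · obtain ⟨u, rfl⟩ := ha
    have hne : χ u ≠ 1 := fun h ↦ ha1 (eq_one_of_apply_eq_one hχ h)
    have hpow : χ u ^ orderOf χ = 1 := by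
      rw [← pow_apply_coe, pow_orderOf_eq_one, one_apply_coe]
    simp_rw [pow_apply_coe]
    rw [geom_sum_eq hne, hpow, sub_self, zero_div]
  · simp [map_nonunit _ ha]

end MulChar

variable (F) in
noncomputable def complexQuadraticChar : MulChar F ℂ :=
  (quadraticChar F).ringHomComp (Int.castRingHom ℂ)

lemma complexQuadraticChar_apply (a : F) : complexQuadraticChar F a = quadraticChar F a := rfl

lemma complexQuadraticChar_mul_self : complexQuadraticChar F * complexQuadraticChar F = 1 := by
  rw [← sq]
  exact ((quadraticChar_isQuadratic F).comp (Int.castRingHom ℂ)).sq_eq_one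

lemma complexQuadraticChar_ne_one (hF : ringChar F ≠ 2) : complexQuadraticChar F ≠ 1 := by
  obtain ⟨a, ha⟩ := quadraticChar_exists_neg_one' hF
  intro h
  have := congrArg (· (a : F)) h
  norm_num [complexQuadraticChar_apply, ha] at this

lemma MulChar.pow_card_units_div_two_of_orderOf_eq (hF : ringChar F ≠ 2) {χ : MulChar F ℂ}
    (hχ : orderOf χ = Fintype.card Fˣ) :
    χ ^ (Fintype.card Fˣ / 2) = complexQuadraticChar F := by
  obtain ⟨k, hk, hχk⟩ := exists_pow_eq_of_orderOf_eq hχ (complexQuadraticChar F)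
  have hk0 : k ≠ 0 := by
    rintro rfl
    exact complexQuadraticChar_ne_one hF (hχk ▸ pow_zero χ)
  obtain ⟨c, hc⟩ : Fintype.card Fˣ ∣ 2 * k := hχ ▸ orderOf_dvd_of_pow_eq_one <| by
    rw [mul_comm, pow_mul, hχk, sq, complexQuadraticChar_mul_self]
  have hk2 : 2 * k = Fintype.card Fˣ := by
    rcases c with _ | _ | c
    · omega
    · omega
    · nlinarith
  rw [← hχk, ← hk2, Nat.mul_div_cancel_left k two_pos]

lemma MulChar.sum_apply_one_sub_sq (hF : ringChar F ≠ 2) (φ : MulChar F ℂ) :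
    ∑ u : F, φ (1 - u ^ 2) = ∑ v : F, (complexQuadraticChar F v + 1) * φ (1 - v) := by
  rw [← Finset.sum_fiberwise Finset.univ (· ^ 2)]
  refine Finset.sum_congr rfl fun v _ ↦ ?_
  have hcard := quadraticChar_card_sqrts hF v
  rw [Set.toFinset_ofPred] at hcard
  rw [Finset.sum_congr rfl fun u hu ↦ by rw [(Finset.mem_filter.mp hu).2], Finset.sum_const,
    nsmul_eq_mul, complexQuadraticChar_apply]
  exact_mod_cast congrArg (fun z : ℤ ↦ (z : ℂ) * φ (1 - v)) hcard

lemma jacobiSum_complexQuadraticChar (hF : ringChar F ≠ 2) {φ : MulChar F ℂ} (hφ : φ ≠ 1) :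
    jacobiSum (complexQuadraticChar F) φ = φ 4 * jacobiSum φ φ := by
  have hshift : ∑ v : F, φ (1 - v) = 0 := by
    rw [Fintype.sum_equiv (Equiv.subLeft 1) (fun v ↦ φ (1 - v)) φ fun v ↦ rfl,
      φ.sum_eq_zero_of_ne_one hφ]
  rw [φ.apply_four_mul_jacobiSum_self hF, φ.sum_apply_one_sub_sq hF, jacobiSum]
  simp only [add_mul, one_mul, Finset.sum_add_distrib, hshift, add_zero]

lemma gaussSum_mul_gaussSum_complexQuadraticChar_mul (hF : ringChar F ≠ 2) {ψ : AddChar F ℂ}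
    (hψ : ψ.IsPrimitive) {φ : MulChar F ℂ} (hφ : φ ≠ 1) (hφ2 : φ * φ ≠ 1) :
    φ 4 * (gaussSum φ ψ * gaussSum (complexQuadraticChar F * φ) ψ)
      = gaussSum (φ * φ) ψ * gaussSum (complexQuadraticChar F) ψ := by
  set η := complexQuadraticChar F
  have hηφ : η * φ ≠ 1 := by
    intro h
    have hφη : φ = η := by
      rw [eq_inv_of_mul_eq_one_right h, inv_eq_of_mul_eq_one_right complexQuadraticChar_mul_self]
    exact hφ2 (hφη ▸ complexQuadraticChar_mul_self)
  have hGφ : gaussSum φ ψ ≠ 0 :=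
    gaussSum_ne_zero_of_nontrivial (Nat.cast_ne_zero.mpr Fintype.card_ne_zero) hφ hψ
  have h1 := jacobiSum_mul_nontrivial hφ2 ψ
  have h2 := jacobiSum_mul_nontrivial hηφ ψ
  have h3 := jacobiSum_complexQuadraticChar hF hφ
  have hJ : jacobiSum φ φ ≠ 0 := by
    intro h0
    rw [h0, mul_zero] at h1
    exact mul_ne_zero hGφ hGφ h1.symm
  apply mul_right_cancel₀ hJ
  linear_combination
    gaussSum φ ψ * h2 - gaussSum η ψ * h1 - gaussSum φ ψ * gaussSum (η * φ) ψ * h3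

lemma MulChar.sum_pow_apply_neg_one_mul_gaussSum_mul_gaussSum {χ ω : MulChar F ℂ}
    (hχ : orderOf χ = Fintype.card Fˣ) (hω : ω ≠ 1) (ψ : AddChar F ℂ) :
    ∑ t ∈ range (orderOf χ),
      (χ ^ t) (-1) * gaussSum (χ ^ t) ψ * gaussSum (ω * (χ ^ t)⁻¹) ψ = 0 := by
  have hterm (t : ℕ) : (χ ^ t) (-1) * gaussSum (χ ^ t) ψ * gaussSum (ω * (χ ^ t)⁻¹) ψ
      = ∑ y, ∑ x, ω y * ψ (x + y) * (χ ^ t) (-x * y⁻¹) := by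
    rw [gaussSum, gaussSum, mul_assoc, sum_mul_sum, mul_sum]
    simp only [mul_sum]
    rw [sum_comm]
    refine sum_congr rfl fun y _ ↦ sum_congr rfl fun x _ ↦ ?_
    rw [mul_apply, inv_apply', AddChar.map_add_eq_mul, show -x * y⁻¹ = -1 * x * y⁻¹ by ring,
      map_mul, map_mul]
    ring
  have hfiber (y : F) :
      ∑ x, ω y * ψ (x + y) * (if -x * y⁻¹ = 1 then (orderOf χ : ℂ) else 0)
        = orderOf χ * ω y := by
    rcases eq_or_ne y 0 with rfl | hy
    · simp
    rw [sum_eq_single (-y) (fun x _ hx ↦ ?_) (by simp)]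
    · simp [hy]
      ring
    · rw [if_neg fun h ↦ hx ?_, mul_zero]
      rw [mul_inv_eq_one₀ hy] at h
      exact neg_eq_iff_eq_neg.mp h
  calc _ = ∑ t ∈ range (orderOf χ), ∑ y, ∑ x, ω y * ψ (x + y) * (χ ^ t) (-x * y⁻¹) :=
        sum_congr rfl fun t _ ↦ hterm t
    _ = ∑ y, ∑ x, ω y * ψ (x + y) * ∑ t ∈ range (orderOf χ), (χ ^ t) (-x * y⁻¹) := by
        rw [sum_comm]
        refine sum_congr rfl fun y _ ↦ ?_
        rw [sum_comm]
        simp only [mul_sum]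
    _ = ∑ y, (orderOf χ : ℂ) * ω y := by
        simp only [sum_range_orderOf_pow_apply hχ, hfiber]
    _ = 0 := by rw [← mul_sum, ω.sum_eq_zero_of_ne_one hω, mul_zero]

theorem gLevel_gaussSum (hF : ringChar F ≠ 2) {χ : MulChar F ℂ}
    (hχ : orderOf χ = Fintype.card Fˣ) {ψ : AddChar F ℂ} (hψ : ψ.IsPrimitive) {r : ℂ}
    (hr : r ^ 2 = Fintype.card F) :
    GLevel (orderOf χ) (fun a ↦ gaussSum (χ ^ a.val) ψ / r) (χ 4) := by
  have hm : 0 < orderOf χ := χ.orderOf_pos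
  have hneg (t : ℕ) : (χ ^ t) (-1) = (-1) ^ t := by
    rw [← Units.coe_neg_one, MulChar.pow_apply_coe, Units.coe_neg_one,
      χ.apply_neg_one_of_orderOf_eq hF hχ]
  have hχη : χ ^ (orderOf χ / 2) = complexQuadraticChar F := by
    rw [hχ]
    exact χ.pow_card_units_div_two_of_orderOf_eq hF hχ
  have h4 : IsUnit (4 : F) := by
    rw [isUnit_iff_ne_zero, show (4 : F) = 2 ^ 2 by norm_num]
    exact pow_ne_zero 2 (Ring.two_ne_zero hF)
  refine ⟨fun s h1 h2 ↦ ?_, fun s h1 h2 ↦ ?_, fun s h1 h2 ↦ ?_, ?_⟩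
  · simp only [pow_val_natCast_orderOf, pow_val_intCast_orderOf hm]
    have hsum := χ.sum_pow_apply_neg_one_mul_gaussSum_mul_gaussSum hχ
      (pow_ne_one_of_lt_orderOf (x := χ) (n := 2 * s) (by omega) (by omega)) ψ
    simp only [hneg] at hsum
    rw [← zero_div (r ^ 2), ← hsum, Finset.sum_div]
    refine Finset.sum_congr rfl fun t _ ↦ ?_
    rw [zpow_sub, zpow_natCast, show χ ^ (2 * (s : ℤ)) = χ ^ (2 * s) by norm_cast]
    ring
  · simp only [pow_val_natCast_orderOf]
    have hinv : χ ^ (orderOf χ - s) = (χ ^ s)⁻¹ :=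
      eq_inv_of_mul_eq_one_right <| by rw [← pow_add, Nat.add_sub_cancel' (by omega),
        pow_orderOf_eq_one]
    rw [hinv, div_mul_div_comm, gaussSum_mul_gaussSum_inv
      (pow_ne_one_of_lt_orderOf (by omega) (by omega)) hψ, hneg, ← sq, hr]
    field_simp
  · simp only [pow_val_natCast_orderOf]
    have hHD := gaussSum_mul_gaussSum_complexQuadraticChar_mul hF hψ
      (pow_ne_one_of_lt_orderOf (x := χ) (n := s) (by omega) (by omega))
      (by rw [← pow_add]; exact pow_ne_one_of_lt_orderOf (by omega) (by omega))
    rw [pow_add, hχη, ← MulChar.pow_apply' χ (by omega), two_mul, pow_add]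
    linear_combination hHD / r ^ 2
  · rw [← h4.unit_spec, ← MulChar.pow_apply_coe, h4.unit_spec, hχη,
      complexQuadraticChar_apply, show (4 : F) = 2 ^ 2 by norm_num,
      quadraticChar_sq_one' (Ring.two_ne_zero hF)]
    simp

end FiniteField

theorem exists_gLevel_sq_apply_zero {m p n : ℕ} (hp : p.Prime) (hn : 0 < n)
    (hm : m + 1 = p ^ n) (heven : Even m) :
    ∃ (g : ZMod m → ℂ) (h : ℂ), GLevel m g h ∧ g 0 ^ 2 = 1 / ((m : ℂ) + 1) := by
  classical
  have : Fact p.Prime := ⟨hp⟩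
  let F := GaloisField p n
  let : Fintype F := Fintype.ofFinite F
  have hcard : Fintype.card F = m + 1 := by
    rw [← Nat.card_eq_fintype_card, GaloisField.card p n hn.ne', hm]
  have hF : ringChar F ≠ 2 := by
    rw [Ne, FiniteField.even_card_iff_char_two, hcard]
    obtain ⟨k, rfl⟩ := heven
    omega
  obtain ⟨χ, hχ⟩ := MulChar.exists_mulChar_orderOf_eq_card_units F
    (Complex.isPrimitiveRoot_exp _ Fintype.card_ne_zero)
  obtain rfl : orderOf χ = m := by rw [hχ, Fintype.card_units, hcard, Nat.add_sub_cancel]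
  have hψ := AddChar.FiniteField.primitiveChar_to_Complex_isPrimitive F
  have hr : ((√(Fintype.card F) : ℝ) : ℂ) ^ 2 = Fintype.card F := by
    rw [← ofReal_pow, Real.sq_sqrt (Nat.cast_nonneg _), ofReal_natCast]
  refine ⟨_, _, gLevel_gaussSum hF hχ hψ hr, ?_⟩
  have hψ1 : AddChar.FiniteField.primitiveChar_to_Complex F ≠ 1 := fun h ↦
    hψ one_ne_zero (by rw [AddChar.mulShift_one, h])
  rw [ZMod.val_zero, pow_zero, gaussSum_one_left hψ1, div_pow, hr, hcard]
  push_cast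
  ring

theorem stmt13 (m : ℕ) (hm : 0 < m) (heven : Even m) :
    (∃ (g : ZMod m → ℂ) (h : ℂ), GLevel m g h ∧ g 0 = (m : ℂ) / 2 - 1) ∧
    ((∃ p n : ℕ, p.Prime ∧ 0 < n ∧ m + 1 = p ^ n) →
      ∃ (g : ZMod m → ℂ) (h : ℂ), GLevel m g h ∧ (g 0) ^ 2 = 1 / ((m : ℂ) + 1)) ∧
    (∃ (g : ZMod m → ℂ) (h : ℂ), GLevel m g h) := by
  have : NeZero m := ⟨hm.ne'⟩
  have hphase := gLevel_quadraticPhase heven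
  refine ⟨⟨_, _, hphase, quadraticPhase_zero⟩, ?_, ⟨_, _, hphase⟩⟩
  rintro ⟨p, n, hp, hn, hpn⟩
  exact exists_gLevel_sq_apply_zero hp hn hpn heven
end

section
/- Let χ be a multiplicative character of order m on F_q and let s be an integer with s ≢ 0 (mod m). Then Σ_{t=1}^{m−1} J_q(χ^s, χ^t) = 1 + m · Σ_{α ∈ H_{q,m}} χ^s(1 − α). -/
/-- The set of nonzero `m`-th powers in `F`. -/
def Hset (F : Type*) [Field F] (m : ℕ) : Set F :=
  {x : F | x ≠ 0 ∧ ∃ y : F, y ^ m = x}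

/-- The Jacobi sum `J_q(χ, ψ) = ∑ α ∈ F_q, χ(α) ψ(1 - α)`. -/
noncomputable def Jsum {F : Type*} [Field F] [Fintype F] (χ ψ : MulChar F ℂ) : ℂ :=
  ∑ α : F, χ α * ψ (1 - α)

theorem stmt16 (p m f : ℕ) (hp : p.Prime) (hm : 0 < m) (hf : 0 < f)
    (F : Type*) [Field F] [Fintype F]
    (hq : ∃ n : ℕ, 0 < n ∧ Fintype.card F = p ^ n)
    (hcard : Fintype.card F = m * f + 1)
    (χ : MulChar F ℂ) (hχ : orderOf χ = m) (s : ℤ) (hs : ¬ (m : ℤ) ∣ s) :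
    ∑ t ∈ Finset.Icc 1 (m - 1), Jsum (χ ^ s) (χ ^ t)
      = 1 + (m : ℂ) * ∑ α ∈ (Set.toFinite (Hset F m)).toFinset, (χ ^ s) (1 - α) := by
  classical
  have hm1 : m ≠ 1 := by rintro rfl; exact hs (one_dvd s)
  have hm2 : 2 ≤ m := by omega
  obtain ⟨g, hg⟩ := IsCyclic.exists_generator (α := Fˣ)
  -- transfer the order of χ to the order of its value at a generator
  have horder : orderOf (χ (g : F)) = m := by
    rw [← hχ, orderOf_eq_orderOf_iff]
    intro n
    constructor
    · intro h
      ext a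
      obtain ⟨k, hk0⟩ := mem_powers_iff_mem_zpowers.mpr (hg a)
      have hk : g ^ k = a := hk0
      rw [MulChar.pow_apply_coe, MulChar.one_apply_coe, ← hk, Units.val_pow_eq_pow_val,
        map_pow, ← pow_mul, mul_comm, pow_mul, h, one_pow]
    · intro h
      have := congrArg (fun ψ : MulChar F ℂ => ψ (g : F)) h
      simpa [MulChar.pow_apply_coe, MulChar.one_apply_coe] using this
  -- characterization of nonzero m-th powers by χ
  have hA : ∀ x : F, x ≠ 0 → ((∃ y : F, y ^ m = x) ↔ χ x = 1) := by
    intro x hx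
    constructor
    · rintro ⟨y, rfl⟩
      have hy : y ≠ 0 := by rintro rfl; simp [zero_pow (by omega : m ≠ 0)] at hx
      have h1 : (χ ^ m) y = 1 := by
        rw [← hχ, pow_orderOf_eq_one χ, MulChar.one_apply (isUnit_iff_ne_zero.mpr hy)]
      rw [map_pow]
      rwa [MulChar.pow_apply' χ (by omega) y] at h1
    · intro h1
      obtain ⟨u, hu⟩ := isUnit_iff_ne_zero.mpr hx
      obtain ⟨k, hk0⟩ := mem_powers_iff_mem_zpowers.mpr (hg u)
      have hk : g ^ k = u := hk0
      have hx1 : χ ((g : F) ^ k) = 1 := by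
        rw [← Units.val_pow_eq_pow_val, hk, hu]; exact h1
      rw [map_pow] at hx1
      have hdvd : m ∣ k := by
        rw [← horder]; exact orderOf_dvd_of_pow_eq_one hx1
      obtain ⟨j, rfl⟩ := hdvd
      exact ⟨(g : F) ^ j, by rw [← pow_mul, mul_comm, ← hu, ← hk, Units.val_pow_eq_pow_val]⟩
  -- the character sum over 1 ≤ t ≤ m-1
  have hS : ∀ x : F, (∑ t ∈ Finset.Icc 1 (m - 1), (χ ^ t) x)
      = (if x ∈ Hset F m then (m : ℂ) else 0) - (if x = 0 then 0 else 1) := by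
    intro x
    by_cases hx : x = 0
    · subst hx
      rw [Finset.sum_eq_zero, if_neg (by simp [Hset]), if_pos rfl, sub_zero]
      intro t _
      exact MulChar.map_nonunit _ not_isUnit_zero
    · have hxu : IsUnit x := isUnit_iff_ne_zero.mpr hx
      have hrange : Finset.range m = insert 0 (Finset.Icc 1 (m - 1)) := by
        ext t; simp; omega
      have hsplit : ∑ t ∈ Finset.range m, (χ x) ^ t
          = 1 + ∑ t ∈ Finset.Icc 1 (m - 1), (χ ^ t) x := by
        rw [hrange, Finset.sum_insert (by simp), pow_zero]
        congr 1
        apply Finset.sum_congr rfl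
        intro t ht
        rw [MulChar.pow_apply' χ (by simp at ht; omega) x]
      have hxm : (χ x) ^ m = 1 := by
        have h1 : (χ ^ m) x = 1 := by
          rw [← hχ, pow_orderOf_eq_one χ, MulChar.one_apply hxu]
        rwa [MulChar.pow_apply' χ (by omega) x] at h1
      by_cases hχx : χ x = 1
      · have hmem : x ∈ Hset F m := ⟨hx, (hA x hx).mpr hχx⟩
        rw [if_pos hmem, if_neg hx]
        have : ∑ t ∈ Finset.range m, (χ x) ^ t = (m : ℂ) := by
          simp [hχx]
        rw [this] at hsplit
        linear_combination -hsplit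
      · have hmem : x ∉ Hset F m := fun h => hχx ((hA x hx).mp h.2)
        rw [if_neg hmem, if_neg hx]
        have : ∑ t ∈ Finset.range m, (χ x) ^ t = 0 := by
          rw [geom_sum_eq hχx, hxm, sub_self, zero_div]
        rw [this] at hsplit
        linear_combination -hsplit
  -- χ ^ s is nontrivial
  have hψ : (χ : MulChar F ℂ) ^ s ≠ 1 := by
    intro h
    exact hs (by rw [← hχ] at hs ⊢; exact (orderOf_dvd_iff_zpow_eq_one).mpr h)
  have hψsum : ∑ a : F, (χ ^ s) a = 0 := MulChar.sum_eq_zero_of_ne_one hψ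
  -- main computation
  have step1 : ∑ t ∈ Finset.Icc 1 (m - 1), Jsum (χ ^ s) (χ ^ t)
      = ∑ α : F, (χ ^ s) α * ∑ t ∈ Finset.Icc 1 (m - 1), (χ ^ t) (1 - α) := by
    unfold Jsum
    rw [Finset.sum_comm]
    exact Finset.sum_congr rfl fun α _ => (Finset.mul_sum _ _ _).symm
  rw [step1]
  simp_rw [hS, mul_sub]
  rw [Finset.sum_sub_distrib]
  have hB : ∑ α : F, (χ ^ s) α * (if (1 - α : F) = 0 then 0 else 1) = -1 := by
    have heq : ∀ α : F, (χ ^ s) α * (if (1 - α : F) = 0 then (0 : ℂ) else 1)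
        = (χ ^ s) α - (if α = 1 then (χ ^ s) α else 0) := by
      intro α
      rcases eq_or_ne α 1 with rfl | h
      · simp
      · rw [if_neg (sub_ne_zero.mpr (Ne.symm h)), if_neg h, mul_one, sub_zero]
    simp_rw [heq]
    rw [Finset.sum_sub_distrib, hψsum, Finset.sum_ite_eq' Finset.univ (1 : F)]
    simp
  have hAsum : ∑ α : F, (χ ^ s) α * (if (1 - α : F) ∈ Hset F m then (m : ℂ) else 0)
      = (m : ℂ) * ∑ β ∈ (Set.toFinite (Hset F m)).toFinset, (χ ^ s) (1 - β) := by
    have h1 : ∑ α : F, (χ ^ s) α * (if (1 - α : F) ∈ Hset F m then (m : ℂ) else 0)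
        = ∑ α ∈ Finset.univ.filter (fun α : F => (1 - α : F) ∈ Hset F m),
            (m : ℂ) * (χ ^ s) α := by
      rw [Finset.sum_filter]
      apply Finset.sum_congr rfl
      intro α _
      by_cases h : (1 - α : F) ∈ Hset F m <;> simp [h, mul_comm]
    rw [h1, Finset.mul_sum]
    apply Finset.sum_nbij' (fun α => 1 - α) (fun β => 1 - β)
    · intro a ha
      simp only [Finset.mem_filter, Finset.mem_univ, true_and] at ha
      rwa [Set.Finite.mem_toFinset]
    · intro b hb
      simp only [Finset.mem_filter, Finset.mem_univ, true_and]
      rw [Set.Finite.mem_toFinset] at hb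
      rwa [sub_sub_cancel]
    · intro a _; rw [sub_sub_cancel]
    · intro b _; rw [sub_sub_cancel]
    · intro a _; rw [sub_sub_cancel]
  rw [hB, hAsum]
  ring
end
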